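/- arXiv:1902.09224 — 2 statements merged into one kernel-verified Lean document; each statement's English description precedes it below -/
import Mathlib

section
/- For each positive integer k, the constant A_k := (6/π²) Σ_{ℓ powerful, f(ℓ) = k − 1} 1/ψ(ℓ) satisfies A_k ≤ (6/π²) · 1/(k − 1)!. -/
open Finset
open scoped Classical

/-- Number of distinct exponents in the prime factorization of `n`. -/
noncomputable def fexp (n : ℕ) : ℕ :=
  (n.primeFactors.image fun p => n.factorization p).card

/-- `n` is powerful if every prime dividing `n` divides it at least twice. -/
def Powerful (n : ℕ) : Prop :=
  0 < n ∧ ∀ p : ℕ, p.Prime → p ∣ n → p ^ 2 ∣ n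

/-- Dedekind `ψ` function, as a real number. -/
noncomputable def dedekindPsi (n : ℕ) : ℝ :=
  (n : ℝ) * ∏ p ∈ n.primeFactors, (1 + 1 / (p : ℝ))

noncomputable def rho : ℕ → ℕ → ℝ
  | 0, _ => 0
  | 1, n => if n = 1 then 1 else 0
  | (k + 2), n =>
      if n = 1 ∨ ¬ Squarefree n then 0
      else (1 / ((n : ℝ) - 1)) * ∑ d ∈ n.divisors.filter (· < n), rho (k + 1) d

/-- `g(n) = ω(n) - f(n)`. -/
noncomputable def gexp (n : ℕ) : ℕ := n.primeFactors.card - fexp n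

/-- `n` is special if all exponents in its prime factorization are distinct. -/
noncomputable def Special (n : ℕ) : Prop := fexp n = n.primeFactors.card

private lemma geom_range_le {r : ℝ} (h0 : 0 ≤ r) (h1 : r < 1) (n : ℕ) :
    ∑ i ∈ Finset.range n, r ^ i ≤ 1 / (1 - r) := by
  rw [geom_sum_eq (by linarith) n,
    show r ^ n - 1 = -(1 - r ^ n) by ring, show r - 1 = -(1 - r) by ring, neg_div_neg_eq]
  have hr : (0:ℝ) < 1 - r := by linarith
  have hn : 0 ≤ r ^ n := pow_nonneg h0 n
  gcongr
  linarith

private lemma two_pow_mul_factorial_le (m : ℕ) (hm : 1 ≤ m) (j : ℕ) :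
    m.factorial * 2 ^ j ≤ (m + j).factorial := by
  induction j with
  | zero => simp
  | succ j ih =>
      have h2 : 2 ≤ m + j + 1 := by omega
      calc m.factorial * 2 ^ (j + 1) = m.factorial * 2 ^ j * 2 := by ring
        _ ≤ (m + j).factorial * 2 := Nat.mul_le_mul_right _ ih
        _ ≤ (m + j).factorial * (m + j + 1) := Nat.mul_le_mul_left _ h2
        _ = (m + (j + 1)).factorial := by
            rw [show m + (j + 1) = (m + j) + 1 by ring, Nat.factorial_succ]; ring

private lemma two_term_binom (x y : ℝ) (hx : 0 ≤ x) (hy : 0 ≤ y) (n : ℕ) :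
    x ^ (n + 1) + (n + 1 : ℝ) * y * x ^ n ≤ (x + y) ^ (n + 1) := by
  induction n with
  | zero => norm_num
  | succ n ih =>
      have hxn : 0 ≤ x ^ n := pow_nonneg hx n
      have h2 : (x + y) * (x ^ (n + 1) + (n + 1 : ℝ) * y * x ^ n) ≤ (x + y) * (x + y) ^ (n + 1) :=
        mul_le_mul_of_nonneg_left ih (by linarith)
      have e : (x + y) * (x ^ (n + 1) + ((n : ℝ) + 1) * y * x ^ n)
          = x ^ (n + 2) + ((n : ℝ) + 2) * y * x ^ (n + 1) + ((n : ℝ) + 1) * y ^ 2 * x ^ n := by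
        ring
      have e2 : (x + y) * (x + y) ^ (n + 1) = (x + y) ^ (n + 2) := by ring
      have hyx : 0 ≤ ((n : ℝ) + 1) * y ^ 2 * x ^ n := by positivity
      push_cast
      push_cast at h2 e e2
      nlinarith

private lemma esymm_le (c : ℕ → ℝ) (P : Finset ℕ) :
    (∀ p ∈ P, 0 ≤ c p) → ∀ m : ℕ, (m.factorial : ℝ) * ∑ Q ∈ P.powersetCard m, ∏ p ∈ Q, c p
      ≤ (∑ p ∈ P, c p) ^ m := by
  classical
  induction P using Finset.induction_on with
  | empty =>
      intro _ m
      cases m with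
      | zero => simp
      | succ m =>
          rw [Finset.powersetCard_eq_empty.mpr (by simp)]
          simp
  | @insert a P ha ih =>
      intro hc m
      have hca : 0 ≤ c a := hc a (Finset.mem_insert_self a P)
      have hc' : ∀ p ∈ P, 0 ≤ c p := fun p hp => hc p (Finset.mem_insert_of_mem hp)
      have ih' := ih hc'
      have hC : 0 ≤ ∑ p ∈ P, c p := Finset.sum_nonneg hc'
      cases m with
      | zero => simp
      | succ m =>
          rw [Finset.powersetCard_succ_insert ha]
          have hdisj : Disjoint (P.powersetCard (m + 1)) ((P.powersetCard m).image (insert a)) := by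
            rw [Finset.disjoint_left]
            intro Q hQ hQ'
            obtain ⟨R, hR, rfl⟩ := Finset.mem_image.mp hQ'
            have := (Finset.mem_powersetCard.mp hQ).1
            exact ha (this (Finset.mem_insert_self a R))
          have hinj : ∀ R1 ∈ P.powersetCard m, ∀ R2 ∈ P.powersetCard m,
              insert a R1 = insert a R2 → R1 = R2 := by
            intro R1 h1 R2 h2 h
            have na1 : a ∉ R1 := fun hmem => ha ((Finset.mem_powersetCard.mp h1).1 hmem)
            have na2 : a ∉ R2 := fun hmem => ha ((Finset.mem_powersetCard.mp h2).1 hmem)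
            rw [← Finset.erase_insert na1, ← Finset.erase_insert na2, h]
          rw [Finset.sum_union hdisj, Finset.sum_image hinj]
          have himg : ∀ R ∈ P.powersetCard m, ∏ p ∈ insert a R, c p = c a * ∏ p ∈ R, c p := by
            intro R hR
            exact Finset.prod_insert fun hmem => ha ((Finset.mem_powersetCard.mp hR).1 hmem)
          rw [Finset.sum_congr rfl himg, ← Finset.mul_sum, Finset.sum_insert ha]
          set C := ∑ p ∈ P, c p with hCdef
          set X := ∑ Q ∈ P.powersetCard (m + 1), ∏ p ∈ Q, c p with hX
          set Y := ∑ Q ∈ P.powersetCard m, ∏ p ∈ Q, c p with hY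
          have hYnn : 0 ≤ Y := Finset.sum_nonneg fun Q hQ =>
            Finset.prod_nonneg fun p hp =>
              hc' p ((Finset.mem_powersetCard.mp hQ).1 hp)
          have h1 : ((m + 1).factorial : ℝ) * X ≤ C ^ (m + 1) := ih' (m + 1)
          have h2 : ((m).factorial : ℝ) * Y ≤ C ^ m := ih' m
          have hbin : C ^ (m + 1) + ((m : ℝ) + 1) * c a * C ^ m ≤ (C + c a) ^ (m + 1) := by
            have := two_term_binom C (c a) hC hca m
            push_cast at this ⊢
            linarith
          have hfact : ((m + 1).factorial : ℝ) = ((m : ℝ) + 1) * m.factorial := by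
            rw [Nat.factorial_succ]; push_cast; ring
          have key : ((m + 1).factorial : ℝ) * (X + c a * Y) ≤ C ^ (m + 1) + ((m : ℝ) + 1) * c a * C ^ m := by
            have h3 : ((m + 1).factorial : ℝ) * (c a * Y) ≤ ((m : ℝ) + 1) * c a * C ^ m := by
              rw [hfact]
              have : ((m : ℝ) + 1) * m.factorial * (c a * Y) = ((m : ℝ) + 1) * c a * ((m.factorial : ℝ) * Y) := by ring
              rw [this]
              have hm1 : 0 ≤ ((m : ℝ) + 1) * c a := mul_nonneg (by positivity) hca
              exact mul_le_mul_of_nonneg_left h2 hm1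
            linarith [h1, h3]
          calc ((m + 1).factorial : ℝ) * (X + c a * Y)
              ≤ C ^ (m + 1) + ((m : ℝ) + 1) * c a * C ^ m := key
            _ ≤ (C + c a) ^ (m + 1) := hbin
            _ = (c a + C) ^ (m + 1) := by ring

private lemma sum_inv_sq_sub_one_le (P : Finset ℕ) (hP : ∀ p ∈ P, p.Prime) :
    ∑ p ∈ P, 1 / ((p : ℝ) ^ 2 - 1) ≤ 7 / 12 := by
  classical
  have hnn : ∀ p ∈ P, 0 ≤ 1 / ((p : ℝ) ^ 2 - 1) := by
    intro p hp
    have h2 : 2 ≤ p := (hP p hp).two_le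
    have : (2 : ℝ) ≤ (p : ℝ) := by exact_mod_cast h2
    have : (3 : ℝ) ≤ (p : ℝ) ^ 2 - 1 := by nlinarith
    positivity
  have hodd : ∑ p ∈ P.erase 2, 1 / ((p : ℝ) ^ 2 - 1) ≤ 1 / 4 := by
    set P' := P.erase 2 with hP'
    have hofacts : ∀ p ∈ P', 3 ≤ p ∧ p % 2 = 1 := by
      intro p hp
      have hpr := hP p (Finset.mem_of_mem_erase hp)
      have hne : p ≠ 2 := Finset.ne_of_mem_erase hp
      have h2 := hpr.two_le
      have hodd := hpr.odd_of_ne_two hne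
      obtain ⟨t, ht⟩ := hodd
      omega
    set J := ∑ p ∈ P', p with hJ
    set d : ℕ → ℝ := fun j => (1 / 4) * (1 / (j : ℝ) - 1 / ((j : ℝ) + 1)) with hd
    have hdnn : ∀ j : ℕ, 1 ≤ j → 0 ≤ d j := by
      intro j h
      have h1 : (0 : ℝ) < j := by exact_mod_cast h
      have : 1 / ((j : ℝ) + 1) ≤ 1 / (j : ℝ) := by
        apply one_div_le_one_div_of_le h1; linarith
      simp only [hd]; nlinarith
    have hterm : ∀ p ∈ P', 1 / ((p : ℝ) ^ 2 - 1) = d ((p - 1) / 2) := by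
      intro p hp
      obtain ⟨h3, hmod⟩ := hofacts p hp
      set j := (p - 1) / 2 with hjdef
      have hpj : p = 2 * j + 1 := by omega
      have hj1 : 1 ≤ j := by omega
      have hjR : (1 : ℝ) ≤ (j : ℝ) := by exact_mod_cast hj1
      have hpR : (p : ℝ) = 2 * (j : ℝ) + 1 := by exact_mod_cast congrArg (Nat.cast : ℕ → ℝ) hpj
      rw [hpR]
      simp only [hd]
      have h0 : (0 : ℝ) < (j : ℝ) := by linarith
      have e1 : (2 * (j : ℝ) + 1) ^ 2 - 1 = 4 * ((j : ℝ) * ((j : ℝ) + 1)) := by ring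
      have e2 : 1 / (j : ℝ) - 1 / ((j : ℝ) + 1) = 1 / ((j : ℝ) * ((j : ℝ) + 1)) := by
        rw [div_sub_div _ _ (ne_of_gt h0) (by linarith)]
        congr 1
        ring
      rw [e1, e2, one_div, one_div, mul_inv]
      ring
    have hinj : ∀ p1 ∈ P', ∀ p2 ∈ P', (p1 - 1) / 2 = (p2 - 1) / 2 → p1 = p2 := by
      intro p1 h1 p2 h2 h
      obtain ⟨h31, hm1⟩ := hofacts p1 h1
      obtain ⟨h32, hm2⟩ := hofacts p2 h2
      omega
    have himg : P'.image (fun p => (p - 1) / 2) ⊆ Finset.Icc 1 J := by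
      intro j hj
      obtain ⟨p, hp, rfl⟩ := Finset.mem_image.mp hj
      obtain ⟨h3, hmod⟩ := hofacts p hp
      have hpJ : p ≤ J := Finset.single_le_sum (f := fun x => x) (fun i _ => Nat.zero_le i) hp
      simp only [Finset.mem_Icc]
      omega
    calc ∑ p ∈ P', 1 / ((p : ℝ) ^ 2 - 1)
        = ∑ p ∈ P', d ((p - 1) / 2) := Finset.sum_congr rfl hterm
      _ = ∑ j ∈ P'.image (fun p => (p - 1) / 2), d j := (Finset.sum_image hinj).symm
      _ ≤ ∑ j ∈ Finset.Icc 1 J, d j :=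
          Finset.sum_le_sum_of_subset_of_nonneg himg
            (fun j hj _ => hdnn j (Finset.mem_Icc.mp hj).1)
      _ ≤ 1 / 4 := by
          have : ∑ j ∈ Finset.Icc 1 J, d j
              = (1 / 4) * ∑ j ∈ Finset.Icc 1 J, (1 / (j : ℝ) - 1 / ((j : ℝ) + 1)) := by
            rw [Finset.mul_sum]
          rw [this]
          have htel : ∑ j ∈ Finset.Icc 1 J, (1 / (j : ℝ) - 1 / ((j : ℝ) + 1)) ≤ 1 := by
            rw [show Finset.Icc 1 J = Finset.Ico 1 (J + 1) by rw [Finset.Ico_add_one_right_eq_Icc],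
              Finset.sum_Ico_eq_sum_range]
            have : ∑ i ∈ Finset.range (J + 1 - 1), (1 / ((1 + i : ℕ) : ℝ) - 1 / (((1 + i : ℕ) : ℝ) + 1))
                = ∑ i ∈ Finset.range J, ((fun t : ℕ => 1 / ((t : ℝ) + 1)) i - (fun t : ℕ => 1 / ((t : ℝ) + 1)) (i + 1)) := by
              apply Finset.sum_congr (by norm_num)
              intro i _
              push_cast
              ring_nf
            rw [this, Finset.sum_range_sub' (fun t : ℕ => 1 / ((t : ℝ) + 1)) J]
            have : 0 ≤ 1 / ((J : ℝ) + 1) := by positivity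
            norm_num
            linarith
          linarith
  by_cases h2P : 2 ∈ P
  · rw [← Finset.add_sum_erase P _ h2P]
    have : (1 : ℝ) / ((2 : ℕ) ^ 2 - 1) = 1 / 3 := by norm_num
    rw [this]
    linarith
  · rw [show P.erase 2 = P from Finset.erase_eq_of_notMem h2P] at hodd
    linarith

private lemma psi_nonneg (n : ℕ) : 0 ≤ dedekindPsi n := by
  unfold dedekindPsi
  apply mul_nonneg (Nat.cast_nonneg n)
  apply Finset.prod_nonneg
  intro p _
  positivity

private lemma psi_eq_prod {ℓ : ℕ} (hℓ : ℓ ≠ 0) :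
    dedekindPsi ℓ = ∏ p ∈ ℓ.primeFactors, ((p : ℝ) ^ (ℓ.factorization p) * (1 + 1 / (p : ℝ))) := by
  unfold dedekindPsi
  rw [Finset.prod_mul_distrib]
  congr 1
  have h : ℓ = ∏ p ∈ ℓ.primeFactors, p ^ (ℓ.factorization p) := by
    conv_lhs => rw [← Nat.factorization_prod_pow_eq_self hℓ]
    rfl
  conv_lhs => rw [h]
  push_cast
  rfl

private lemma geom_prime_le {p : ℕ} (hp : p.Prime) (B : ℕ) :
    ∑ a ∈ Finset.Icc 2 B, 1 / ((p : ℝ) ^ a * (1 + 1 / (p : ℝ))) ≤ 1 / ((p : ℝ) ^ 2 - 1) := by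
  have h2 : (2 : ℝ) ≤ (p : ℝ) := by exact_mod_cast hp.two_le
  have hp0 : (0 : ℝ) < (p : ℝ) := by linarith
  have hpne : (p : ℝ) ≠ 0 := ne_of_gt hp0
  set r : ℝ := 1 / (p : ℝ) with hr
  have hr0 : 0 < r := by positivity
  have hr1 : r ≤ 1 / 2 := by
    rw [hr]
    rw [div_le_div_iff₀ hp0 (by norm_num)]
    linarith
  have h1r : (0 : ℝ) < 1 - r := by linarith
  have h1r' : (0 : ℝ) < 1 + r := by linarith
  have hpa : ∀ a : ℕ, ((p : ℝ) ^ a) ≠ 0 := fun a => pow_ne_zero a hpne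
  have h1p : (1 : ℝ) + 1 / (p : ℝ) ≠ 0 := by positivity
  have hterm : ∀ a : ℕ, 1 / ((p : ℝ) ^ a * (1 + 1 / (p : ℝ))) = (1 / (1 + r)) * r ^ a := by
    intro a
    rw [hr, one_div_pow]
    field_simp
  rw [Finset.sum_congr rfl (fun a _ => hterm a), ← Finset.mul_sum]
  have hsum : ∑ a ∈ Finset.Icc 2 B, r ^ a ≤ r ^ 2 * (1 / (1 - r)) := by
    rw [show Finset.Icc 2 B = Finset.Ico 2 (B + 1) by rw [Finset.Ico_add_one_right_eq_Icc],
      Finset.sum_Ico_eq_sum_range]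
    have : ∀ i ∈ Finset.range (B + 1 - 2), r ^ (2 + i) = r ^ 2 * r ^ i := fun i _ => pow_add r 2 i
    rw [Finset.sum_congr rfl this, ← Finset.mul_sum]
    have := geom_range_le (le_of_lt hr0) (by linarith) (B + 1 - 2)
    have hr2 : (0:ℝ) ≤ r ^ 2 := by positivity
    exact mul_le_mul_of_nonneg_left this hr2
  have hle : (1 / (1 + r)) * ∑ a ∈ Finset.Icc 2 B, r ^ a ≤ (1 / (1 + r)) * (r ^ 2 * (1 / (1 - r))) := by
    apply mul_le_mul_of_nonneg_left hsum
    positivity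
  refine hle.trans (le_of_eq ?_)
  have e2 : (1 + 1 / (p : ℝ)) * ((p : ℝ) ^ 2 * (1 - 1 / (p : ℝ))) = (p : ℝ) ^ 2 - 1 := by
    field_simp
    ring
  rw [hr, one_div_pow, div_mul_div_comm, div_mul_div_comm, one_mul, one_mul, e2]

private lemma fiber_le (T : Finset ℕ) (hT : ∀ ℓ ∈ T, Powerful ℓ) (Q : Finset ℕ)
    (hQ : ∀ p ∈ Q, p.Prime) :
    ∑ ℓ ∈ T.filter (fun ℓ => ℓ.primeFactors = Q), 1 / dedekindPsi ℓ
      ≤ ∏ p ∈ Q, 1 / ((p : ℝ) ^ 2 - 1) := by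
  classical
  set B := 2 + ∑ ℓ ∈ T, ℓ with hB
  set V := T.filter (fun ℓ => ℓ.primeFactors = Q) with hV
  have hmem : ∀ ℓ ∈ V, Powerful ℓ ∧ ℓ.primeFactors = Q := fun ℓ h =>
    ⟨hT ℓ (Finset.mem_of_mem_filter ℓ h), (Finset.mem_filter.mp h).2⟩
  set f : ℕ → ℕ → ℝ := fun p a => 1 / ((p : ℝ) ^ a * (1 + 1 / (p : ℝ))) with hfdef
  have hfnn : ∀ p, p.Prime → ∀ a, 0 ≤ f p a := by
    intro p hp a
    have h2 : (0 : ℝ) < (p : ℝ) := by exact_mod_cast hp.pos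
    simp only [hfdef]
    positivity
  set φ : ℕ → ((a : ℕ) → a ∈ Q → ℕ) := fun ℓ => fun p _ => ℓ.factorization p with hφ
  have hterm : ∀ ℓ ∈ V, 1 / dedekindPsi ℓ = ∏ x ∈ Q.attach, f x.1 (φ ℓ x.1 x.2) := by
    intro ℓ hℓ
    obtain ⟨hpow, hQℓ⟩ := hmem ℓ hℓ
    have hℓ0 : ℓ ≠ 0 := hpow.1.ne'
    rw [psi_eq_prod hℓ0, hQℓ]
    rw [one_div, ← Finset.prod_inv_distrib]
    rw [← Finset.prod_attach Q fun p => ((p : ℝ) ^ ℓ.factorization p * (1 + 1 / (p : ℝ)))⁻¹]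
    exact Finset.prod_congr rfl fun x _ => by simp [hfdef, hφ, one_div]
  have hinj : ∀ a ∈ V, ∀ b ∈ V, φ a = φ b → a = b := by
    intro a ha b hb h
    obtain ⟨hpa, hQa⟩ := hmem a ha
    obtain ⟨hpb, hQb⟩ := hmem b hb
    have ha0 : a ≠ 0 := hpa.1.ne'
    have hb0 : b ≠ 0 := hpb.1.ne'
    apply Nat.factorization_inj ha0 hb0
    ext p
    by_cases hp : p ∈ Q
    · exact congrFun (congrFun h p) hp
    · have h1 : a.factorization p = 0 := by
        apply Finsupp.notMem_support_iff.mp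
        rw [Nat.support_factorization, hQa]; exact hp
      have h2 : b.factorization p = 0 := by
        apply Finsupp.notMem_support_iff.mp
        rw [Nat.support_factorization, hQb]; exact hp
      rw [h1, h2]
  have hsub : V.image φ ⊆ Q.pi (fun _ => Finset.Icc 2 B) := by
    intro x hx
    obtain ⟨ℓ, hℓ, rfl⟩ := Finset.mem_image.mp hx
    obtain ⟨hpow, hQℓ⟩ := hmem ℓ hℓ
    have hℓ0 : ℓ ≠ 0 := hpow.1.ne'
    rw [Finset.mem_pi]
    intro p hp
    rw [Finset.mem_Icc]
    constructor
    · have hpdvd : p ∣ ℓ := Nat.dvd_of_mem_primeFactors (hQℓ ▸ hp)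
      have := hpow.2 p (hQ p hp) hpdvd
      exact ((hQ p hp).pow_dvd_iff_le_factorization hℓ0).mp this
    · have h1 : ℓ.factorization p < ℓ := Nat.factorization_lt p hℓ0
      have h2 : ℓ ≤ ∑ ℓ' ∈ T, ℓ' :=
        Finset.single_le_sum (f := fun x => x) (fun i _ => Nat.zero_le i)
          (Finset.mem_of_mem_filter ℓ hℓ)
      simp only [hφ]
      omega
  have hHnn : ∀ x : (a : ℕ) → a ∈ Q → ℕ, 0 ≤ ∏ p ∈ Q.attach, f p.1 (x p.1 p.2) := by
    intro x
    exact Finset.prod_nonneg fun p _ => hfnn p.1 (hQ p.1 p.2) _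
  calc ∑ ℓ ∈ V, 1 / dedekindPsi ℓ
      = ∑ ℓ ∈ V, ∏ x ∈ Q.attach, f x.1 (φ ℓ x.1 x.2) := Finset.sum_congr rfl hterm
    _ = ∑ x ∈ V.image φ, ∏ y ∈ Q.attach, f y.1 (x y.1 y.2) :=
        (Finset.sum_image (f := fun x : (a : ℕ) → a ∈ Q → ℕ =>
          ∏ y ∈ Q.attach, f y.1 (x y.1 y.2)) (g := φ) hinj).symm
    _ ≤ ∑ x ∈ Q.pi (fun _ => Finset.Icc 2 B), ∏ y ∈ Q.attach, f y.1 (x y.1 y.2) :=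
        Finset.sum_le_sum_of_subset_of_nonneg hsub (fun x _ _ => hHnn x)
    _ = ∏ p ∈ Q, ∑ a ∈ Finset.Icc 2 B, f p a := (Finset.prod_sum _ _ _).symm
    _ ≤ ∏ p ∈ Q, 1 / ((p : ℝ) ^ 2 - 1) := by
        apply Finset.prod_le_prod
        · intro p hp
          exact Finset.sum_nonneg fun a _ => hfnn p (hQ p hp) a
        · intro p hp
          exact geom_prime_le (hQ p hp) B

private lemma key (m : ℕ) (T : Finset ℕ)
    (hT : ∀ ℓ ∈ T, Powerful ℓ ∧ fexp ℓ = m) :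
    ∑ ℓ ∈ T, 1 / dedekindPsi ℓ ≤ 1 / (m.factorial : ℝ) := by
  classical
  rcases Nat.eq_zero_or_pos m with hm | hm
  · subst hm
    have hsub : T ⊆ {1} := by
      intro ℓ hℓ
      obtain ⟨hpow, hf⟩ := hT ℓ hℓ
      have himg : (ℓ.primeFactors.image fun p => ℓ.factorization p) = ∅ :=
        Finset.card_eq_zero.mp hf
      have hpf : ℓ.primeFactors = ∅ := Finset.image_eq_empty.mp himg
      rcases Nat.primeFactors_eq_empty.mp hpf with h | h
      · exact absurd h hpow.1.ne'
      · simp [h]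
    calc ∑ ℓ ∈ T, 1 / dedekindPsi ℓ
        ≤ ∑ ℓ ∈ ({1} : Finset ℕ), 1 / dedekindPsi ℓ :=
          Finset.sum_le_sum_of_subset_of_nonneg hsub
            (fun ℓ _ _ => one_div_nonneg.mpr (psi_nonneg ℓ))
      _ = 1 / dedekindPsi 1 := Finset.sum_singleton _ _
      _ ≤ 1 / (Nat.factorial 0 : ℝ) := by
          have h1 : dedekindPsi 1 = 1 := by unfold dedekindPsi; simp
          rw [h1]
          norm_num
  · have hm' : m ≠ 0 := hm.ne'
    set c : ℕ → ℝ := fun p => 1 / ((p : ℝ) ^ 2 - 1) with hc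
    set 𝒬 := T.image Nat.primeFactors with h𝒬
    have hQprime : ∀ Q ∈ 𝒬, ∀ p ∈ Q, p.Prime := by
      intro Q hQ p hp
      obtain ⟨ℓ, _, rfl⟩ := Finset.mem_image.mp hQ
      exact Nat.prime_of_mem_primeFactors hp
    set P := 𝒬.sup id with hPdef
    have hPprime : ∀ p ∈ P, p.Prime := by
      intro p hp
      obtain ⟨Q, hQ, hpQ⟩ := Finset.mem_sup.mp hp
      exact hQprime Q hQ p hpQ
    have hcnn : ∀ p, p.Prime → 0 ≤ c p := by
      intro p hp
      have h2 : (2 : ℝ) ≤ (p : ℝ) := by exact_mod_cast hp.two_le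
      have : (3 : ℝ) ≤ (p : ℝ) ^ 2 - 1 := by nlinarith
      simp only [hc]
      positivity
    set C := ∑ p ∈ P, c p with hCdef
    have hCle : C ≤ 7 / 12 := sum_inv_sq_sub_one_le P hPprime
    have hC0 : 0 ≤ C := Finset.sum_nonneg fun p hp => hcnn p (hPprime p hp)
    -- fiberwise decomposition
    have hmaps : ∀ ℓ ∈ T, ℓ.primeFactors ∈ 𝒬 := fun ℓ hℓ =>
      Finset.mem_image_of_mem Nat.primeFactors hℓ
    rw [← Finset.sum_fiberwise_of_maps_to hmaps (fun ℓ => 1 / dedekindPsi ℓ)]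
    have step1 : ∑ Q ∈ 𝒬, ∑ ℓ ∈ T.filter (fun ℓ => ℓ.primeFactors = Q), 1 / dedekindPsi ℓ
        ≤ ∑ Q ∈ 𝒬, ∏ p ∈ Q, c p := by
      apply Finset.sum_le_sum
      intro Q hQ
      exact fiber_le T (fun ℓ hℓ => (hT ℓ hℓ).1) Q (hQprime Q hQ)
    refine step1.trans ?_
    -- compare with all subsets of P of card ≥ m
    set 𝔅 := (Finset.Icc m P.card).biUnion (fun s => P.powersetCard s) with h𝔅
    have h𝒬𝔅 : 𝒬 ⊆ 𝔅 := by
      intro Q hQ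
      have hQP : Q ⊆ P := Finset.le_sup (f := id) hQ
      have hmQ : m ≤ Q.card := by
        obtain ⟨ℓ, hℓT, rfl⟩ := Finset.mem_image.mp hQ
        have := (hT ℓ hℓT).2
        calc m = fexp ℓ := this.symm
          _ ≤ ℓ.primeFactors.card := Finset.card_image_le
      exact Finset.mem_biUnion.mpr ⟨Q.card,
        Finset.mem_Icc.mpr ⟨hmQ, Finset.card_le_card hQP⟩,
        Finset.mem_powersetCard.mpr ⟨hQP, rfl⟩⟩
    have hprodnn : ∀ Q ∈ 𝔅, 0 ≤ ∏ p ∈ Q, c p := by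
      intro Q hQ
      obtain ⟨s, _, hQs⟩ := Finset.mem_biUnion.mp hQ
      have hQP := (Finset.mem_powersetCard.mp hQs).1
      exact Finset.prod_nonneg fun p hp => hcnn p (hPprime p (hQP hp))
    have step2 : ∑ Q ∈ 𝒬, ∏ p ∈ Q, c p ≤ ∑ Q ∈ 𝔅, ∏ p ∈ Q, c p :=
      Finset.sum_le_sum_of_subset_of_nonneg h𝒬𝔅 (fun Q hQ _ => hprodnn Q hQ)
    refine step2.trans ?_
    have hdisj : (↑(Finset.Icc m P.card) : Set ℕ).PairwiseDisjoint
        (fun s => P.powersetCard s) := by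
      intro s1 _ s2 _ hne
      refine Finset.disjoint_left.mpr ?_
      intro Q hQ1 hQ2
      exact hne ((Finset.mem_powersetCard.mp hQ1).2.symm.trans
        (Finset.mem_powersetCard.mp hQ2).2)
    rw [h𝔅, Finset.sum_biUnion hdisj]
    -- bound each E_s
    have step3 : ∀ s ∈ Finset.Icc m P.card,
        ∑ Q ∈ P.powersetCard s, ∏ p ∈ Q, c p ≤ C ^ s / (s.factorial : ℝ) := by
      intro s _
      have h := esymm_le c P (fun p hp => hcnn p (hPprime p hp)) s
      have hs : (0 : ℝ) < (s.factorial : ℝ) := by exact_mod_cast s.factorial_pos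
      rw [le_div_iff₀ hs]
      linarith [h]
    refine (Finset.sum_le_sum step3).trans ?_
    -- geometric tail bound
    have step4 : ∀ s ∈ Finset.Icc m P.card,
        C ^ s / (s.factorial : ℝ) ≤ C ^ m / (m.factorial : ℝ) * (C / 2) ^ (s - m) := by
      intro s hs
      have hms : m ≤ s := (Finset.mem_Icc.mp hs).1
      set j := s - m with hj
      have hsmj : s = m + j := by omega
      have hfac : (m.factorial : ℝ) * 2 ^ j ≤ (s.factorial : ℝ) := by
        rw [hsmj]
        exact_mod_cast two_pow_mul_factorial_le m hm j
      have hnum : C ^ s = C ^ m * C ^ j := by rw [hsmj, pow_add]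
      have he : C ^ m / (m.factorial : ℝ) * (C / 2) ^ j
          = (C ^ m * C ^ j) / ((m.factorial : ℝ) * 2 ^ j) := by
        rw [div_pow]
        field_simp
      rw [hnum, he]
      apply div_le_div_of_nonneg_left ?_ ?_ hfac
      · positivity
      · positivity
    refine (Finset.sum_le_sum step4).trans ?_
    rw [← Finset.mul_sum]
    have hgeo : ∑ s ∈ Finset.Icc m P.card, (C / 2) ^ (s - m) ≤ 1 / (1 - C / 2) := by
      rw [show Finset.Icc m P.card = Finset.Ico m (P.card + 1) from (Finset.Ico_add_one_right_eq_Icc m P.card).symm,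
        Finset.sum_Ico_eq_sum_range]
      have hcong : ∀ i ∈ Finset.range (P.card + 1 - m), (C / 2) ^ (m + i - m) = (C / 2) ^ i := by
        intro i _
        congr 1
        omega
      rw [Finset.sum_congr rfl hcong]
      exact geom_range_le (by positivity) (by linarith) _
    have hCm : C ^ m ≤ C := pow_le_of_le_one hC0 (by linarith) hm'
    have hfm : (0 : ℝ) < (m.factorial : ℝ) := by exact_mod_cast m.factorial_pos
    have hhalf : (0 : ℝ) < 1 - C / 2 := by linarith
    calc C ^ m / (m.factorial : ℝ) * ∑ s ∈ Finset.Icc m P.card, (C / 2) ^ (s - m)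
        ≤ C ^ m / (m.factorial : ℝ) * (1 / (1 - C / 2)) :=
          mul_le_mul_of_nonneg_left hgeo (by positivity)
      _ ≤ 1 / (m.factorial : ℝ) := by
          rw [div_mul_eq_mul_div, div_le_div_iff₀ hfm hfm]
          have h1 : C ^ m * (1 / (1 - C / 2)) ≤ 1 := by
            rw [mul_one_div, div_le_one hhalf]
            calc C ^ m ≤ C := hCm
              _ ≤ 1 - C / 2 := by linarith
          nlinarith [hfm.le, h1]

theorem stmt_12 (k : ℕ) (hk : 1 ≤ k) :
    6 / Real.pi ^ 2 *
        (∑' ℓ : ℕ, if Powerful ℓ ∧ fexp ℓ = k - 1 then 1 / dedekindPsi ℓ else 0)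
      ≤ 6 / Real.pi ^ 2 * (1 / (k - 1).factorial) := by
  refine mul_le_mul_of_nonneg_left ?_ (by positivity)
  refine tsum_le_of_sum_le' (by positivity) ?_
  intro u
  rw [← Finset.sum_filter]
  exact key (k - 1) _ (fun ℓ hℓ => (Finset.mem_filter.mp hℓ).2)
end

section
/- For each nonnegative integer r, the series B_r := Σ_{ℓ powerful, g(ℓ) = r} 1/ℓ converges, and there exists a constant C > 0 such that for all real y ≥ 2, |Σ_{ℓ powerful, ℓ ≤ y, g(ℓ) = r} 1/ℓ − B_r| ≤ C / y^{1/2}. -/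
/-! Every powerful number is `a ^ 2 * b ^ 3`, so the reciprocals of powerful numbers `n > y` sum to
at most `∑_b b⁻³ ∑_{a > √y / b^(3/2)} a⁻² ≤ ∑_b b⁻³ · 2 b^(3/2) / √y = (2 / √y) ∑_b b^(-3/2)`.
This tail bound holds for any set of powerful numbers and gives both the convergence and the
rate. -/

open Finset
open scoped Classical

theorem Powerful.exists_eq_sq_mul_cube {n : ℕ} (hn : Powerful n) :
    ∃ a b : ℕ, 0 < a ∧ 0 < b ∧ n = a ^ 2 * b ^ 3 := by
  obtain ⟨s, t, hs, ht, rfl, hsq⟩ := Nat.sq_mul_squarefree_of_pos hn.1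
  -- every prime of the squarefree part `s` occurs to an odd power, hence also divides `t`
  have hst : s ∣ t := by
    rw [← Nat.prod_primeFactors_of_squarefree hsq, Nat.prod_primeFactors_dvd_iff ht.ne']
    intro p hp
    have hp' := Nat.prime_of_mem_primeFactors hp
    refine (Nat.mem_primeFactors_of_ne_zero ht.ne').2 ⟨hp', by_contra fun hpt => ?_⟩
    have hcop : Nat.Coprime (p ^ 2) (t ^ 2) :=
      Nat.Coprime.pow 2 2 ((Nat.Prime.coprime_iff_not_dvd hp').2 hpt)
    have hp2 : p * p ∣ s := by
      rw [← sq]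
      exact hcop.dvd_of_dvd_mul_left
        (hn.2 p hp' (dvd_mul_of_dvd_right (Nat.dvd_of_mem_primeFactors hp) _))
    exact hp'.one_lt.ne' (Nat.isUnit_iff.1 (hsq p hp2))
  obtain ⟨c, rfl⟩ := hst
  exact ⟨c, s, Nat.pos_of_mul_pos_left ht, hs, by ring⟩

theorem sum_inv_sq_le_of_forall_lt (A : Finset ℕ) {T : ℝ} (hT : 0 < T) (hA : ∀ a ∈ A, T < a) :
    ∑ a ∈ A, ((a : ℝ) ^ 2)⁻¹ ≤ 2 / T := by
  have hsub : A ⊆ Ioo ⌊T⌋₊ (A.sup id + 1) := fun a ha =>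
    mem_Ioo.2 ⟨Nat.floor_lt hT.le |>.2 (hA a ha), Nat.lt_succ_of_le (le_sup (f := id) ha)⟩
  calc ∑ a ∈ A, ((a : ℝ) ^ 2)⁻¹
      ≤ ∑ a ∈ Ioo ⌊T⌋₊ (A.sup id + 1), ((a : ℝ) ^ 2)⁻¹ :=
        sum_le_sum_of_subset_of_nonneg hsub fun _ _ _ => by positivity
    _ ≤ 2 / (⌊T⌋₊ + 1) := sum_Ioo_inv_sq_le _ _
    _ ≤ 2 / T := div_le_div_of_nonneg_left zero_le_two hT (Nat.lt_floor_add_one T).le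

theorem sum_inv_sq_mul_cube_le (A : Finset ℕ) {y : ℝ} (hy : 0 < y) {b : ℕ} (hb : 0 < b)
    (hA : ∀ a ∈ A, y < (a : ℝ) ^ 2 * (b : ℝ) ^ 3) :
    ∑ a ∈ A, ((a : ℝ) ^ 2 * (b : ℝ) ^ 3)⁻¹ ≤ 2 / (√y * (b : ℝ) ^ ((3 : ℝ) / 2)) := by
  set β := (b : ℝ) ^ ((3 : ℝ) / 2)
  have hβ : 0 < β := by positivity
  have hβsq : β ^ 2 = (b : ℝ) ^ 3 := by
    rw [← Real.rpow_natCast, ← Real.rpow_mul (Nat.cast_nonneg b)]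
    norm_num
  have hA' : ∀ a ∈ A, √y / β < a := by
    intro a ha
    rw [div_lt_iff₀ hβ]
    refine lt_of_pow_lt_pow_left₀ 2 (by positivity) ?_
    rw [Real.sq_sqrt hy.le, mul_pow, hβsq]
    exact hA a ha
  calc ∑ a ∈ A, ((a : ℝ) ^ 2 * (b : ℝ) ^ 3)⁻¹
      = (∑ a ∈ A, ((a : ℝ) ^ 2)⁻¹) * ((b : ℝ) ^ 3)⁻¹ := by
        simp only [mul_inv, sum_mul]
    _ ≤ 2 / (√y / β) * ((b : ℝ) ^ 3)⁻¹ := by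
        gcongr
        exact sum_inv_sq_le_of_forall_lt A (by positivity) hA'
    _ = 2 / (√y * β) := by
        rw [← hβsq]
        field_simp

theorem sum_inv_le_of_powerful (F : Finset ℕ) {y : ℝ} (hy : 0 < y)
    (hF : ∀ n ∈ F, Powerful n ∧ y < n) :
    ∑ n ∈ F, (n : ℝ)⁻¹ ≤ 2 * (∑' b : ℕ, ((b : ℝ) ^ ((3 : ℝ) / 2))⁻¹) / √y := by
  choose! a b _ hb hab using fun n hn => (hF n hn).1.exists_eq_sq_mul_cube
  have hfiber : ∀ β ∈ F.image b, ∑ n ∈ F with b n = β, (n : ℝ)⁻¹ =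
      ∑ α ∈ (F.filter (b · = β)).image a, ((α : ℝ) ^ 2 * (β : ℝ) ^ 3)⁻¹ := by
    intro β _
    rw [sum_image]
    · refine sum_congr rfl fun n hn => ?_
      rw [mem_filter] at hn
      rw [← hn.2]
      exact_mod_cast congrArg (fun k : ℕ => (k : ℝ)⁻¹) (hab n hn.1)
    · intro n hn m hm hnm
      rw [coe_filter] at hn hm
      rw [hab n hn.1, hab m hm.1, hnm, hn.2, hm.2]
  calc ∑ n ∈ F, (n : ℝ)⁻¹
      = ∑ β ∈ F.image b, ∑ n ∈ F with b n = β, (n : ℝ)⁻¹ :=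
        (sum_fiberwise_of_maps_to (fun n hn => mem_image_of_mem b hn) _).symm
    _ ≤ ∑ β ∈ F.image b, 2 / (√y * (β : ℝ) ^ ((3 : ℝ) / 2)) := by
        refine sum_le_sum fun β hβ => ?_
        rw [hfiber β hβ]
        obtain ⟨m, hm, rfl⟩ := mem_image.1 hβ
        refine sum_inv_sq_mul_cube_le _ hy (hb m hm) fun α hα => ?_
        obtain ⟨n, hn, rfl⟩ := mem_image.1 hα
        rw [mem_filter] at hn
        have := (hF n hn.1).2
        rw [hab n hn.1, hn.2] at this
        exact_mod_cast this
    _ = 2 / √y * ∑ β ∈ F.image b, ((β : ℝ) ^ ((3 : ℝ) / 2))⁻¹ := by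
        rw [mul_sum]
        refine sum_congr rfl fun β _ => ?_
        rw [div_mul_eq_div_div, div_eq_mul_inv]
    _ ≤ 2 / √y * ∑' b : ℕ, ((b : ℝ) ^ ((3 : ℝ) / 2))⁻¹ := by
        gcongr
        exact (Real.summable_nat_rpow_inv.2 (by norm_num)).sum_le_tsum _ fun _ _ => by positivity
    _ = 2 * (∑' b : ℕ, ((b : ℝ) ^ ((3 : ℝ) / 2))⁻¹) / √y := by ring

theorem abs_sum_range_sub_tsum_le {f : ℕ → ℝ} (hf : ∀ n, 0 ≤ f n) (hs : Summable f) (N : ℕ)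
    {B : ℝ} (hB : ∀ F : Finset ℕ, (∀ n ∈ F, N ≤ n) → ∑ n ∈ F, f n ≤ B) :
    |∑ n ∈ range N, f n - ∑' n, f n| ≤ B := by
  have htail : ∑' i, f (i + N) ≤ B := by
    refine ((summable_nat_add_iff N).2 hs).tsum_le_of_sum_le fun F => ?_
    simpa using hB (F.map (addRightEmbedding N)) (by simp)
  rw [← hs.sum_add_tsum_nat_add N, sub_add_cancel_left, abs_neg,
    abs_of_nonneg (tsum_nonneg fun i => hf _)]
  exact htail

theorem summable_and_abs_sum_sub_tsum_le_of_powerful (p : ℕ → Prop) [DecidablePred p]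
    (hp : ∀ n, p n → Powerful n) :
    Summable (fun ℓ : ℕ => if p ℓ then 1 / (ℓ : ℝ) else 0) ∧
    ∃ C : ℝ, 0 < C ∧ ∀ y : ℝ, 2 ≤ y →
      |(∑ ℓ ∈ (Finset.Icc 1 ⌊y⌋₊).filter p, 1 / (ℓ : ℝ)) -
          (∑' ℓ : ℕ, if p ℓ then 1 / (ℓ : ℝ) else 0)|
        ≤ C / y ^ ((1 : ℝ) / 2) := by
  set f : ℕ → ℝ := fun ℓ => if p ℓ then 1 / (ℓ : ℝ) else 0
  set K := ∑' b : ℕ, ((b : ℝ) ^ ((3 : ℝ) / 2))⁻¹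
  have hf : ∀ n, 0 ≤ f n := fun n => by positivity
  have hK : 0 < K := (Real.summable_nat_rpow_inv.2 (by norm_num)).tsum_pos
    (fun _ => by positivity) 1 (by norm_num)
  have hbound : ∀ y : ℝ, 0 < y → ∀ F : Finset ℕ, (∀ n ∈ F, p n → y < n) →
      ∑ n ∈ F, f n ≤ 2 * K / √y := fun y hy F hF => by
    simp only [f, ← sum_filter, one_div]
    exact sum_inv_le_of_powerful _ hy fun n hn =>
      ⟨hp n (mem_filter.1 hn).2, hF n (mem_filter.1 hn).1 (mem_filter.1 hn).2⟩
  have hs : Summable f := summable_of_sum_le hf fun F => hbound (1 / 2) (by norm_num) F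
    fun n _ hn => by linarith [show (1 : ℝ) ≤ n by exact_mod_cast (hp n hn).1]
  refine ⟨hs, 2 * K, by positivity, fun y hy => ?_⟩
  have hpartial : ∑ ℓ ∈ (Icc 1 ⌊y⌋₊).filter p, 1 / (ℓ : ℝ) = ∑ n ∈ range (⌊y⌋₊ + 1), f n := by
    rw [range_eq_Ico, sum_eq_sum_Ico_succ_bot (by positivity), Ico_add_one_right_eq_Icc,
      sum_filter]
    simp [f]
  rw [hpartial, ← Real.sqrt_eq_rpow]
  exact abs_sum_range_sub_tsum_le hf hs _ fun F hF => hbound y (by linarith) F fun n hn _ =>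
    (Nat.lt_floor_add_one y).trans_le (by exact_mod_cast hF n hn)

theorem stmt_15 (r : ℕ) :
    Summable (fun ℓ : ℕ => if Powerful ℓ ∧ gexp ℓ = r then 1 / (ℓ : ℝ) else 0) ∧
    ∃ C : ℝ, 0 < C ∧ ∀ y : ℝ, 2 ≤ y →
      |(∑ ℓ ∈ (Finset.Icc 1 ⌊y⌋₊).filter (fun ℓ => Powerful ℓ ∧ gexp ℓ = r), 1 / (ℓ : ℝ)) -
          (∑' ℓ : ℕ, if Powerful ℓ ∧ gexp ℓ = r then 1 / (ℓ : ℝ) else 0)|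
        ≤ C / y ^ ((1 : ℝ) / 2) :=
  summable_and_abs_sum_sub_tsum_le_of_powerful _ fun _ h => h.1
end
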